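/- If X is a separable Banach function space on the unit circle, then the set of trigonometric polynomials is dense in X. -/

import Mathlib

open MeasureTheory Filter Real Set
open scoped ENNReal Topology NNReal

noncomputable section

instance : Fact (0 < 2 * π) := ⟨by positivity⟩

/-- The unit circle, realized as `ℝ / 2πℤ`. -/
abbrev UC := AddCircle (2 * π)

/-- Normalized Lebesgue (Haar) measure on the circle. -/
def m : Measure UC := AddCircle.haarAddCircle

/-- The `n`-th Fejér kernel on the circle. -/
def fejer (n : ℕ) (x : UC) : ℂ :=
  ∑ k ∈ Finset.Icc (-(n : ℤ)) (n : ℤ), ((1 - (|k| : ℝ) / (n + 1)) : ℂ) * fourier k x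

/-- The `n`-th Fejér kernel as a function of the angle `θ`. -/
def fejerR (n : ℕ) (θ : ℝ) : ℝ :=
  ∑ k ∈ Finset.Icc (-(n : ℤ)) (n : ℤ), (1 - (|k| : ℝ) / (n + 1)) * Real.cos (k * θ)

/-- Convolution on the circle with respect to the normalized measure. -/
def conv (f g : UC → ℂ) (x : UC) : ℂ := ∫ y, f (x - y) * g y ∂m

/-- Convolution of nonnegative functions on the circle. -/
def convNN (f g : UC → ℝ≥0∞) (x : UC) : ℝ≥0∞ := ∫⁻ y, f (x - y) * g y ∂m

/-- The set of trigonometric (Laurent) polynomials on the circle. -/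
def TrigPoly : Set (UC → ℂ) :=
  {q | ∃ (n : ℕ) (α : ℤ → ℂ), q = fun x => ∑ k ∈ Finset.Icc (-(n : ℤ)) (n : ℤ), α k * fourier k x}

/-- The set of analytic polynomials on the circle. -/
def AnalyticPoly : Set (UC → ℂ) :=
  {q | ∃ (n : ℕ) (α : ℕ → ℂ), q = fun x => ∑ k ∈ Finset.range (n + 1), α k * fourier (k : ℤ) x}

/-- An arc of the circle. -/
def IsArc (I : Set UC) : Prop := ∃ (c : UC) (r : ℝ), 0 < r ∧ I = Metric.ball c r

/-- The (uncentered) Hardy–Littlewood maximal function over arcs of the circle. -/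
def HLmax (f : UC → ℂ) (t : UC) : ℝ≥0∞ :=
  ⨆ (I : Set UC) (_ : IsArc I ∧ t ∈ I), (m I)⁻¹ * ∫⁻ x in I, (‖f x‖₊ : ℝ≥0∞) ∂m

/-- A Banach function norm on the circle (Bennett–Sharpley axioms (A1)–(A5)). -/
structure BFNorm where
  ρ : (UC → ℝ≥0∞) → ℝ≥0∞
  eq_zero_iff : ∀ f : UC → ℝ≥0∞, Measurable f → (ρ f = 0 ↔ f =ᵐ[m] 0)
  smul_eq : ∀ (f : UC → ℝ≥0∞) (a : ℝ≥0), ρ (fun t => (a : ℝ≥0∞) * f t) = a * ρ f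
  triangle : ∀ f g : UC → ℝ≥0∞, ρ (f + g) ≤ ρ f + ρ g
  mono : ∀ f g : UC → ℝ≥0∞, f ≤ᵐ[m] g → ρ f ≤ ρ g
  fatou : ∀ (fs : ℕ → UC → ℝ≥0∞) (f : UC → ℝ≥0∞), (∀ n, fs n ≤ᵐ[m] fs (n + 1)) →
    (∀ᵐ t ∂m, Tendsto (fun n => fs n t) atTop (𝓝 (f t))) →
    Tendsto (fun n => ρ (fs n)) atTop (𝓝 (ρ f))
  finite_indicator : ∀ E : Set UC, MeasurableSet E → ρ (E.indicator 1) < ⊤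
  integral_le : ∀ E : Set UC, MeasurableSet E → ∃ C : ℝ≥0∞, 0 < C ∧ C < ⊤ ∧
    ∀ f : UC → ℝ≥0∞, ∫⁻ t in E, f t ∂m ≤ C * ρ f

/-- The norm of a complex-valued function in the Banach function space. -/
def BFNorm.N (ρ : BFNorm) (f : UC → ℂ) : ℝ≥0∞ := ρ.ρ (fun t => (‖f t‖₊ : ℝ≥0∞))

/-- Membership in the Banach function space `X`. -/
def BFNorm.mem (ρ : BFNorm) (f : UC → ℂ) : Prop := AEStronglyMeasurable f m ∧ ρ.N f < ⊤

/-- The associate norm `ρ'`. -/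
def BFNorm.assoc (ρ : BFNorm) (g : UC → ℝ≥0∞) : ℝ≥0∞ :=
  ⨆ (f : UC → ℝ≥0∞) (_ : Measurable f ∧ ρ.ρ f ≤ 1), ∫⁻ t, f t * g t ∂m

/-- The associate-space norm of a complex-valued function. -/
def BFNorm.Nassoc (ρ : BFNorm) (f : UC → ℂ) : ℝ≥0∞ := ρ.assoc (fun t => (‖f t‖₊ : ℝ≥0∞))

/-- Separability of the Banach function space `X`. -/
def BFNorm.Separable (ρ : BFNorm) : Prop :=
  ∃ D : Set (UC → ℂ), D.Countable ∧ (∀ g ∈ D, ρ.mem g) ∧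
    ∀ f, ρ.mem f → ∀ ε : ℝ≥0∞, 0 < ε → ∃ g ∈ D, ρ.N (f - g) < ε

/-- Density of a set of functions in the Banach function space `X`. -/
def BFNorm.DenseIn (ρ : BFNorm) (S : Set (UC → ℂ)) : Prop :=
  ∀ f, ρ.mem f → ∀ ε : ℝ≥0∞, 0 < ε → ∃ g ∈ S, ρ.N (f - g) < ε

/-- Rearrangement invariance: equimeasurable functions have equal norm. -/
def BFNorm.RearrInv (ρ : BFNorm) : Prop :=
  ∀ f g : UC → ℝ≥0∞, Measurable f → Measurable g →
    (∀ lam : ℝ≥0∞, m {t | lam < f t} = m {t | lam < g t}) → ρ.ρ f = ρ.ρ g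

/-- Boundedness of the Hardy–Littlewood maximal operator on the associate space. -/
def MaximalBoundedOnAssoc (ρ : BFNorm) : Prop :=
  ∃ C : ℝ≥0∞, C < ⊤ ∧ ∀ f : UC → ℂ, ρ.assoc (HLmax f) ≤ C * ρ.Nassoc f

/-- The modular of the variable Lebesgue space `L^{p(·)}`. -/
def VLmodular (p : UC → ℝ) (f : UC → ℂ) : ℝ≥0∞ := ∫⁻ t, (‖f t‖₊ : ℝ≥0∞) ^ (p t) ∂m

/-- Membership in the variable Lebesgue space `L^{p(·)}`. -/
def VLmem (p : UC → ℝ) (f : UC → ℂ) : Prop :=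
  AEStronglyMeasurable f m ∧ ∃ c : ℝ, 0 < c ∧ VLmodular p (fun t => c⁻¹ • f t) < ⊤

/-- The Luxemburg–Nakano norm of the variable Lebesgue space `L^{p(·)}`. -/
def VLnorm (p : UC → ℝ) (f : UC → ℂ) : ℝ :=
  sInf {c : ℝ | 0 < c ∧ VLmodular p (fun t => c⁻¹ • f t) ≤ 1}

/-- Local log-Hölder continuity of a function on the circle. -/
def LocLogHolder (r : UC → ℝ) : Prop :=
  ∃ C₀ : ℝ, 0 < C₀ ∧ ∀ x y : UC, dist x y < 1/2 → |r x - r y| ≤ C₀ / (-Real.log (dist x y))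

end

/-!
Separability forces the norm of `X` to be absolutely continuous: if some `f ∈ X` kept norm
`≥ c > 0` on the sets of a decreasing sequence with null intersection, Fatou's axiom would
produce disjoint blocks `G k` carrying norm `> c / 2` of `f`, and the functions
`f · 𝟙 (⋃ k ∈ s, G k)`, `s ⊆ ℕ`, would form an uncountable `c / 2`-separated family in `X`.
Absolute continuity lets us truncate `f` to a bounded function, and makes `ρ 𝟙_A` small when
`m A` is; combined with Markov's inequality this upgrades `L¹`-approximation of bounded functions
by continuous ones (clipped to a ball) to approximation in `X`. Finally continuous functions are
uniform limits of trigonometric polynomials (Stone–Weierstrass), and uniform convergence implies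
convergence in `X` because `ρ 1 < ∞`.
-/

instance : IsProbabilityMeasure m := by unfold m; infer_instance

lemma exists_continuous_retraction_closedBall {E : Type*} [NormedAddCommGroup E]
    [NormedSpace ℝ E] {M : ℝ} (hM : 0 < M) :
    ∃ r : E → E, Continuous r ∧ (∀ z, ‖r z‖ ≤ M) ∧ ∀ z, ‖z‖ ≤ M → r z = z := by
  have hmax : ∀ z : E, 0 < max M ‖z‖ := fun z => lt_max_of_lt_left hM
  refine ⟨fun z => (M / max M ‖z‖) • z, ?_, fun z => ?_, fun z hz => ?_⟩
  · exact (continuous_const.div (continuous_const.max continuous_norm)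
      fun z => (hmax z).ne').smul continuous_id
  · rw [norm_smul, Real.norm_of_nonneg (div_nonneg hM.le (hmax z).le), div_mul_eq_mul_div,
      div_le_iff₀ (hmax z)]
    exact mul_le_mul_of_nonneg_left (le_max_right _ _) hM.le
  · change (M / max M ‖z‖) • z = z
    rw [max_eq_left hz, div_self hM.ne', one_smul]

lemma exists_strictMono_forall_succ {P : ℕ → ℕ → Prop} (h : ∀ n, ∃ k > n, P n k) :
    ∃ φ : ℕ → ℕ, StrictMono φ ∧ ∀ j, P (φ j) (φ (j + 1)) := by
  choose g hg hP using h
  refine ⟨fun j => g^[j] 0, strictMono_nat_of_lt_succ fun j => ?_, fun j => ?_⟩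
  · rw [Function.iterate_succ_apply']; exact hg _
  · change P (g^[j] 0) (g^[j + 1] 0)
    rw [Function.iterate_succ_apply']; exact hP _

lemma Antitone.pairwise_disjoint_sdiff_succ {α : Type*} {F : ℕ → Set α} (hF : Antitone F) :
    Pairwise (Function.onFun Disjoint fun j => F j \ F (j + 1)) := by
  refine (pairwise_disjoint_on _).2 fun j l hjl => ?_
  exact disjoint_sdiff_left.mono_right (sdiff_subset.trans (hF hjl))

lemma mem_trigPoly_of_mem_span {P : C(UC, ℂ)}
    (hP : P ∈ Submodule.span ℂ (range (fourier (T := 2 * π)))) : ⇑P ∈ TrigPoly := by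
  obtain ⟨c, rfl⟩ := Finsupp.mem_span_range_iff_exists_finsupp.1 hP
  refine ⟨c.support.sup Int.natAbs, c, funext fun x => ?_⟩
  simp only [Finsupp.sum, ContinuousMap.coe_sum, ContinuousMap.coe_smul, Finset.sum_apply,
    Pi.smul_apply, smul_eq_mul]
  refine Finset.sum_subset (fun k hk => ?_) fun k _ hk => by
    rw [Finsupp.notMem_support_iff.1 hk, zero_mul]
  have := Finset.le_sup (f := Int.natAbs) hk
  rw [Finset.mem_Icc]
  omega

lemma exists_trigPoly_norm_sub_le (g : C(UC, ℂ)) {η : ℝ} (hη : 0 < η) :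
    ∃ p ∈ TrigPoly, ∀ t, ‖g t - p t‖ ≤ η := by
  have hdense : Dense (Submodule.span ℂ (range (fourier (T := 2 * π))) : Set C(UC, ℂ)) := by
    rw [Submodule.dense_iff_topologicalClosure_eq_top, span_fourier_closure_eq_top]
  obtain ⟨P, hP, hgP⟩ := Metric.mem_closure_iff.1 (hdense g) η hη
  refine ⟨P, mem_trigPoly_of_mem_span hP, fun t => ?_⟩
  rw [← dist_eq_norm]
  exact (ContinuousMap.dist_apply_le_dist t).trans hgP.le

namespace BFNorm

variable (ρ : BFNorm)

def ApproxBy (A B : Set (UC → ℂ)) : Prop :=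
  ∀ f ∈ A, ∀ ε : ℝ≥0∞, 0 < ε → ∃ g ∈ B, ρ.N (f - g) < ε

lemma rho_le_rho {f g : UC → ℝ≥0∞} (h : ∀ t, f t ≤ g t) : ρ.ρ f ≤ ρ.ρ g :=
  ρ.mono f g (.of_forall h)

lemma rho_congr_ae {f g : UC → ℝ≥0∞} (h : f =ᵐ[m] g) : ρ.ρ f = ρ.ρ g :=
  le_antisymm (ρ.mono f g h.le) (ρ.mono g f h.symm.le)

lemma rho_const (c : ℝ≥0) : ρ.ρ (fun _ => (c : ℝ≥0∞)) = c * ρ.ρ 1 := by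
  simpa using ρ.smul_eq 1 c

lemma rho_one_lt_top : ρ.ρ 1 < ⊤ := by
  simpa using ρ.finite_indicator univ .univ

lemma N_indicator (s : Set UC) (f : UC → ℂ) :
    ρ.N (s.indicator f) = ρ.ρ (s.indicator fun t => ‖f t‖ₑ) := by
  simp only [N, ← enorm_eq_nnnorm, enorm_indicator_eq_indicator_enorm]

lemma N_sub_comm (f g : UC → ℂ) : ρ.N (f - g) = ρ.N (g - f) := by
  simp only [N, Pi.sub_apply, ← enorm_eq_nnnorm, enorm_sub_rev]

lemma N_sub_le (f g h : UC → ℂ) : ρ.N (f - h) ≤ ρ.N (f - g) + ρ.N (g - h) := by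
  refine (ρ.rho_le_rho fun t => ?_).trans (ρ.triangle _ _)
  have := enorm_add_le (f t - g t) (g t - h t)
  rwa [sub_add_sub_cancel] at this

lemma N_congr_ae {f g : UC → ℂ} (h : f =ᵐ[m] g) : ρ.N f = ρ.N g :=
  ρ.rho_congr_ae (h.mono fun _ ht => congrArg (fun z => (‖z‖₊ : ℝ≥0∞)) ht)

lemma N_le_of_norm_le {h : UC → ℂ} {η : ℝ≥0} (hη : ∀ t, ‖h t‖ ≤ η) : ρ.N h ≤ η * ρ.ρ 1 :=
  (ρ.rho_le_rho fun t => by exact_mod_cast hη t).trans_eq (ρ.rho_const η)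

lemma N_le_of_norm_le_of_notMem {h : UC → ℂ} {A : Set UC} {η K : ℝ≥0}
    (hη : ∀ t ∉ A, ‖h t‖ ≤ η) (hK : ∀ t, ‖h t‖ ≤ K) :
    ρ.N h ≤ η * ρ.ρ 1 + K * ρ.ρ (A.indicator 1) := by
  calc ρ.N h ≤ ρ.ρ ((fun _ => (η : ℝ≥0∞)) + fun t => (K : ℝ≥0∞) * A.indicator 1 t) := by
        refine ρ.rho_le_rho fun t => ?_
        by_cases ht : t ∈ A
        · simp only [Pi.add_apply, indicator_of_mem ht, Pi.one_apply, mul_one]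
          exact le_add_left (by exact_mod_cast hK t)
        · simp only [Pi.add_apply, indicator_of_notMem ht, mul_zero, add_zero]
          exact_mod_cast hη t ht
    _ ≤ _ := ρ.triangle _ _
    _ = η * ρ.ρ 1 + K * ρ.ρ (A.indicator 1) := by rw [ρ.rho_const, ρ.smul_eq]

variable {ρ} in
lemma ApproxBy.trans {A B C : Set (UC → ℂ)} (hAB : ρ.ApproxBy A B) (hBC : ρ.ApproxBy B C) :
    ρ.ApproxBy A C := by
  intro f hf ε hε
  obtain ⟨g, hg, hfg⟩ := hAB f hf (ε / 2) (ENNReal.half_pos hε.ne')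
  obtain ⟨p, hp, hgp⟩ := hBC g hg (ε / 2) (ENNReal.half_pos hε.ne')
  exact ⟨p, hp, (ρ.N_sub_le f g p).trans_lt
    ((ENNReal.add_lt_add hfg hgp).trans_eq (ENNReal.add_halves ε))⟩

lemma approxBy_of_uniform {A B : Set (UC → ℂ)}
    (h : ∀ f ∈ A, ∀ η : ℝ≥0, 0 < η → ∃ g ∈ B, ∀ t, ‖f t - g t‖ ≤ η) : ρ.ApproxBy A B := by
  intro f hf ε hε
  obtain ⟨η, hη, hηε⟩ := ENNReal.exists_nnreal_pos_mul_lt ρ.rho_one_lt_top.ne hε.ne'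
  obtain ⟨g, hg, hfg⟩ := h f hf η hη
  exact ⟨g, hg, (ρ.N_le_of_norm_le hfg).trans_lt hηε⟩

lemma approxBy_continuous_trigPoly : ρ.ApproxBy {g | Continuous g} TrigPoly :=
  ρ.approxBy_of_uniform fun g hg _ hη => exists_trigPoly_norm_sub_le ⟨g, hg⟩ hη

lemma tendsto_rho_indicator_sdiff {E : ℕ → Set UC} (hE : Antitone E) (hE0 : m (⋂ n, E n) = 0)
    (w : UC → ℝ≥0∞) (n : ℕ) :
    Tendsto (fun k => ρ.ρ ((E n \ E k).indicator w)) atTop (𝓝 (ρ.ρ ((E n).indicator w))) := by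
  have hmono : Monotone fun k => E n \ E k := fun k k' hk => sdiff_subset_sdiff_right (hE hk)
  have hlim := ρ.fatou _ ((⋃ k, E n \ E k).indicator w)
    (fun k => .of_forall fun t => indicator_le_indicator_of_subset (hmono k.le_succ)
      (fun _ => zero_le) t)
    (.of_forall fun t => (Monotone.tendsto_indicator _ hmono w t).mono_right (pure_le_nhds _))
  rwa [← sdiff_iInter, ρ.rho_congr_ae (indicator_ae_eq_of_ae_eq_set (sdiff_null_ae_eq_self hE0))]
    at hlim

namespace Separable

variable {ρ}

lemma countable_of_separated (hsep : ρ.Separable) {ι : Type*} {h : ι → UC → ℂ}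
    (hmem : ∀ i, ρ.mem (h i)) {c : ℝ≥0∞} (hc : 0 < c)
    (hfar : Pairwise fun i j => c < ρ.N (h i - h j)) : Countable ι := by
  obtain ⟨D, hD, -, hDdense⟩ := hsep
  choose d hdD hd using fun i => hDdense (h i) (hmem i) (c / 2) (ENNReal.half_pos hc.ne')
  have : Countable D := hD.to_subtype
  refine Function.Injective.countable (f := fun i => (⟨d i, hdD i⟩ : D)) fun i j hij => ?_
  by_contra hne
  refine (hfar hne).not_ge ((ρ.N_sub_le (h i) (d i) (h j)).trans ?_)
  have hdij : ρ.N (d i - h j) = ρ.N (h j - d j) := by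
    have hdij : d i = d j := congrArg Subtype.val hij
    rw [hdij, ρ.N_sub_comm]
  rw [hdij]
  exact (ENNReal.add_lt_add (hd i) (hd j)).le.trans_eq (ENNReal.add_halves c)

lemma exists_rho_indicator_le (hsep : ρ.Separable) {f : UC → ℂ} (hf : ρ.mem f)
    {G : ℕ → Set UC} (hGm : ∀ k, MeasurableSet (G k)) (hG : Pairwise (Function.onFun Disjoint G))
    {c : ℝ≥0∞} (hc : 0 < c) : ∃ k, ρ.ρ ((G k).indicator fun t => ‖f t‖ₑ) ≤ c := by
  by_contra! hlarge
  set h : Set ℕ → UC → ℂ := fun s => (⋃ k ∈ s, G k).indicator f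
  have hmem : ∀ s, ρ.mem (h s) := fun s =>
    ⟨hf.1.indicator (.biUnion (to_countable s) fun k _ => hGm k),
      (ρ.N_indicator _ f).trans_lt ((ρ.rho_le_rho fun t => indicator_le_self _ _ t).trans_lt hf.2)⟩
  have hblock : ∀ s s' k, k ∈ s → k ∉ s' →
      ∀ t, (G k).indicator (fun t => ‖f t‖ₑ) t ≤ ‖h s t - h s' t‖ₑ := by
    intro s s' k hks hks' t
    by_cases htk : t ∈ G k
    · have hts : t ∈ ⋃ k ∈ s, G k := mem_biUnion hks htk
      have hts' : t ∉ ⋃ k ∈ s', G k := by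
        simp only [mem_iUnion, not_exists]
        exact fun l hl htl => (hG (by rintro rfl; exact hks' hl)).ne_of_mem htl htk rfl
      simp [h, indicator_of_mem hts, indicator_of_notMem hts', indicator_of_mem htk]
    · simp [indicator_of_notMem htk]
  have hfar : Pairwise fun s s' => c < ρ.N (h s - h s') := by
    intro s s' hne
    obtain ⟨k, hk⟩ := not_forall.1 (mt Set.ext hne)
    by_cases hks : k ∈ s
    · exact (hlarge k).trans_le (ρ.rho_le_rho (hblock s s' k hks (by tauto)))
    · rw [ρ.N_sub_comm]
      exact (hlarge k).trans_le (ρ.rho_le_rho (hblock s' s k (by tauto) hks))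
  obtain ⟨F, hF⟩ := (hsep.countable_of_separated hmem hc hfar).exists_injective_nat
  exact Function.cantor_injective F hF

theorem tendsto_rho_indicator (hsep : ρ.Separable) {f : UC → ℂ} (hf : ρ.mem f)
    {E : ℕ → Set UC} (hEm : ∀ n, MeasurableSet (E n)) (hE : Antitone E)
    (hE0 : m (⋂ n, E n) = 0) :
    Tendsto (fun n => ρ.ρ ((E n).indicator fun t => ‖f t‖ₑ)) atTop (𝓝 0) := by
  set w : UC → ℝ≥0∞ := fun t => ‖f t‖ₑ
  have hanti : Antitone fun n => ρ.ρ ((E n).indicator w) := fun n n' h =>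
    ρ.rho_le_rho (indicator_le_indicator_of_subset (hE h) fun _ => zero_le)
  set c := ⨅ n, ρ.ρ ((E n).indicator w)
  suffices hc : c = 0 by rw [← hc]; exact tendsto_atTop_iInf hanti
  by_contra hc
  have hctop : c ≠ ⊤ := ((iInf_le (fun n => ρ.ρ ((E n).indicator w)) 0).trans
    (ρ.rho_le_rho fun t => indicator_le_self _ _ t)).trans_lt hf.2 |>.ne
  have hstep : ∀ n, ∃ k > n, c / 2 < ρ.ρ ((E n \ E k).indicator w) := fun n =>
    (((ρ.tendsto_rho_indicator_sdiff hE hE0 w n).eventually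
      (lt_mem_nhds ((ENNReal.half_lt_self hc hctop).trans_le (iInf_le _ n)))).and
      (eventually_gt_atTop n)).exists.imp fun k hk => ⟨hk.2, hk.1⟩
  obtain ⟨φ, hφ, hblocks⟩ := exists_strictMono_forall_succ hstep
  obtain ⟨j, hj⟩ := hsep.exists_rho_indicator_le hf (fun j => (hEm _).diff (hEm _))
    (hE.comp_monotone hφ.monotone).pairwise_disjoint_sdiff_succ (ENNReal.half_pos hc)
  exact (hblocks j).not_ge hj

lemma exists_rho_indicator_lt (hsep : ρ.Separable) {ε : ℝ≥0∞} (hε : 0 < ε) :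
    ∃ δ > 0, ∀ A, MeasurableSet A → m A < δ → ρ.ρ (A.indicator 1) < ε := by
  by_contra! hbig
  obtain ⟨δ, hδ, hδsum⟩ := ENNReal.exists_pos_sum_of_countable one_ne_zero ℕ
  choose A hAm hAδ hAε using fun k => hbig (δ k) (by exact_mod_cast hδ k)
  set E : ℕ → Set UC := fun n => ⋃ k ≥ n, A k
  have hE0 : m (⋂ n, E n) = 0 := by
    rw [show ⋂ n, E n = limsup A atTop from limsup_eq_iInf_iSup_of_nat.symm]
    exact measure_limsup_atTop_eq_zero ((ENNReal.tsum_le_tsum fun k => (hAδ k).le).trans_lt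
      (hδsum.trans ENNReal.one_lt_top)).ne
  have hone : ρ.mem 1 := ⟨aestronglyMeasurable_const, by
    simp only [N, Pi.one_apply, nnnorm_one, ENNReal.coe_one]
    exact ρ.rho_one_lt_top⟩
  have hEm : ∀ n, MeasurableSet (E n) := fun n => .biUnion (to_countable _) fun k _ => hAm k
  have hE : Antitone E := fun n n' h => biUnion_subset_biUnion_left fun k hk => le_trans h hk
  have hlim := hsep.tendsto_rho_indicator hone hEm hE hE0
  obtain ⟨n, hn⟩ := (hlim.eventually (gt_mem_nhds hε)).exists
  have hnorm_one : (fun t => ‖(1 : UC → ℂ) t‖ₑ) = 1 := funext fun t => by simp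
  rw [hnorm_one] at hn
  exact (hAε n).not_gt ((ρ.rho_le_rho (indicator_le_indicator_of_subset
    (subset_biUnion_of_mem (le_refl n)) fun _ => zero_le)).trans_lt hn)

lemma approxBy_bounded (hsep : ρ.Separable) :
    ρ.ApproxBy {f | ρ.mem f} {f | Measurable f ∧ ∃ M, ∀ t, ‖f t‖ ≤ M} := by
  rintro f ⟨hfm, hfN⟩ ε hε
  set f' := hfm.mk f
  have hf' : Measurable f' := hfm.stronglyMeasurable_mk.measurable
  set E : ℕ → Set UC := fun n => {t | n < ‖f' t‖}
  have hEm : ∀ n, MeasurableSet (E n) := fun n => measurableSet_lt measurable_const hf'.norm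
  have hE : Antitone E := fun n n' h t ht =>
    show (n : ℝ) < ‖f' t‖ from lt_of_le_of_lt (by exact_mod_cast h) ht
  have hE0 : ⋂ n, E n = ∅ := eq_empty_of_forall_notMem fun t ht =>
    (exists_nat_gt ‖f' t‖).elim fun n hn => (mem_iInter.1 ht n).not_gt hn
  have hmem : ρ.mem f' := ⟨hf'.aestronglyMeasurable, (ρ.N_congr_ae hfm.ae_eq_mk).symm ▸ hfN⟩
  obtain ⟨n, hn⟩ := ((hsep.tendsto_rho_indicator hmem hEm hE
    (by rw [hE0, measure_empty])).eventually (gt_mem_nhds hε)).exists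
  refine ⟨(E n)ᶜ.indicator f', ⟨hf'.indicator (hEm n).compl, n, fun t => ?_⟩, ?_⟩
  · by_cases ht : t ∈ E n
    · simp [ht]
    · rw [indicator_of_mem (show t ∈ (E n)ᶜ from ht)]
      exact not_lt.1 ht
  · have hdiff : f - (E n)ᶜ.indicator f' =ᵐ[m] (E n).indicator f' :=
      hfm.ae_eq_mk.mono fun t ht => by simp [f', indicator_compl, ht]
    rwa [ρ.N_congr_ae hdiff, ρ.N_indicator]

lemma approxBy_continuous (hsep : ρ.Separable) :
    ρ.ApproxBy {f | Measurable f ∧ ∃ M, ∀ t, ‖f t‖ ≤ M} {g | Continuous g} := by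
  rintro f ⟨hfm, M, hM⟩ ε hε
  lift M to ℝ≥0 using (norm_nonneg _).trans (hM 0)
  have hε2 : ε / 2 ≠ 0 := (ENNReal.half_pos hε.ne').ne'
  obtain ⟨η, hη, hηε⟩ := ENNReal.exists_nnreal_pos_mul_lt ρ.rho_one_lt_top.ne hε2
  set K : ℝ≥0 := M + (M + η)
  obtain ⟨δ, hδ, hsmall⟩ :=
    hsep.exists_rho_indicator_lt (ENNReal.div_pos hε2 (ENNReal.coe_ne_top (r := K)))
  obtain ⟨r, hr, hrδ⟩ := ENNReal.lt_iff_exists_nnreal_btwn.1 hδ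
  have hfint : Integrable f m :=
    (integrable_const (M : ℝ)).mono' hfm.aestronglyMeasurable (.of_forall hM)
  obtain ⟨g₀, hg₀, -⟩ := hfint.exists_boundedContinuous_lintegral_sub_le (μ := m)
    (ε := η * r) (mul_ne_zero (by simpa using hη.ne') hr.ne')
  obtain ⟨R, hRc, hRle, hRfix⟩ :=
    exists_continuous_retraction_closedBall (E := ℂ) (M := M + η) (by positivity)
  set A := {t | (η : ℝ≥0∞) ≤ ‖f t - g₀ t‖ₑ}
  have hmeas : Measurable fun t => ‖f t - g₀ t‖ₑ := (hfm.sub g₀.continuous.measurable).enorm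
  have hA : m A ≤ r := (ENNReal.mul_le_mul_iff_right (by simpa using hη.ne') ENNReal.coe_ne_top).1
    ((mul_meas_ge_le_lintegral₀ hmeas.aemeasurable _).trans hg₀)
  refine ⟨fun t => R (g₀ t), hRc.comp g₀.continuous, ?_⟩
  have hoff : ∀ t ∉ A, ‖f t - R (g₀ t)‖ ≤ η := by
    intro t ht
    have hlt : ‖f t - g₀ t‖ < η := by
      have ht : ‖f t - g₀ t‖ₑ < η := not_le.1 ht
      exact_mod_cast ht
    have hg₀t : ‖g₀ t‖ ≤ M + η := by
      have := norm_sub_norm_le (g₀ t) (f t)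
      rw [norm_sub_rev] at this
      linarith [hM t]
    rw [hRfix _ hg₀t]
    exact hlt.le
  have hall : ∀ t, ‖f t - R (g₀ t)‖ ≤ K := fun t => by
    push_cast [K]
    exact (norm_sub_le _ _).trans (add_le_add (hM t) (hRle _))
  calc ρ.N (f - fun t => R (g₀ t)) ≤ η * ρ.ρ 1 + K * ρ.ρ (A.indicator 1) :=
        ρ.N_le_of_norm_le_of_notMem hoff hall
    _ < ε / 2 + ε / 2 := ENNReal.add_lt_add hηε
        (ENNReal.mul_lt_of_lt_div' (hsmall A (measurableSet_le measurable_const hmeas)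
          (hA.trans_lt hrδ)))
    _ = ε := ENNReal.add_halves ε

end Separable

end BFNorm

noncomputable section

theorem stmt6 (ρ : BFNorm) (hsep : ρ.Separable) : ρ.DenseIn TrigPoly :=
  (hsep.approxBy_bounded.trans hsep.approxBy_continuous).trans ρ.approxBy_continuous_trigPoly
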